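/- (Lemma 2.1, abstract form.) Let G be a finite simple cubic graph with a proper edge 3-coloring c, let a and b be two distinct colors, and let e1 = {u1, v1} and e2 = {u2, v2} be two distinct edges of G lying in the same connected component (a 'colored disk') of the spanning subgraph formed by the edges colored a or b. Let G' be the graph obtained from G by subdividing e1 with a new vertex x (replacing e1 by the edges {u1, x} and {x, v1}), subdividing e2 with a new vertex y, and adding the new edge {x, y}. Then G' is a finite simple cubic graph and G' admits a proper edge 3-coloring. -/
import Mathlib


/-- A proper edge coloring (with colors in `α`): any two distinct edges sharing a common
endpoint receive different colors. -/
def IsProperEdgeColoring {V α : Type*} (G : SimpleGraph V) (c : Sym2 V → α) : Prop :=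
  ∀ e₁ ∈ G.edgeSet, ∀ e₂ ∈ G.edgeSet, e₁ ≠ e₂ → (∃ v, v ∈ e₁ ∧ v ∈ e₂) → c e₁ ≠ c e₂

/-- The spanning subgraph of `G` formed by the edges colored `a` or `b`. -/
def bicolorSubgraph {V : Type*} (G : SimpleGraph V) (c : Sym2 V → Fin 3) (a b : Fin 3) :
    SimpleGraph V :=
  SimpleGraph.fromEdgeSet {e ∈ G.edgeSet | c e = a ∨ c e = b}

/-- The graph obtained from `G` by subdividing the edge `{u₁, v₁}` with a new vertex
`Sum.inr 0`, subdividing the edge `{u₂, v₂}` with a new vertex `Sum.inr 1`, and adding the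
new edge between the two new vertices. -/
def subdivideAndLink {V : Type*} (G : SimpleGraph V) (u₁ v₁ u₂ v₂ : V) :
    SimpleGraph (V ⊕ Fin 2) :=
  SimpleGraph.fromEdgeSet
    ((Sym2.map Sum.inl '' (G.edgeSet \ {s(u₁, v₁), s(u₂, v₂)})) ∪
      {s(Sum.inl u₁, Sum.inr 0), s(Sum.inr 0, Sum.inl v₁),
       s(Sum.inl u₂, Sum.inr 1), s(Sum.inr 1, Sum.inl v₂),
       s(Sum.inr 0, Sum.inr 1)})


open SimpleGraph

/-! ### Auxiliary lemmas -/

section Aux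

lemma aux_two_edges_of_internal {V : Type*} {Γ : SimpleGraph V} {y : V} :
    ∀ ⦃x : V⦄ (q : Γ.Walk x y), q.IsPath → ∀ w, w ∈ q.support → w ≠ x → w ≠ y →
      ∃ z1 z2, z1 ≠ z2 ∧ s(w, z1) ∈ q.edges ∧ s(w, z2) ∈ q.edges := by
  intro x q
  induction q with
  | nil =>
    intro _ w hw hwx _
    simp only [SimpleGraph.Walk.support_nil, List.mem_singleton] at hw
    exact absurd hw hwx
  | @cons x x₂ y h q' ih =>
    intro hq w hw hwx hwy
    have hw' : w ∈ q'.support := by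
      simp only [SimpleGraph.Walk.support_cons, List.mem_cons] at hw
      tauto
    by_cases hwx2 : w = x₂
    · subst hwx2
      cases q' with
      | nil => exact absurd rfl hwy
      | @cons _ z _ h₂ q'' =>
        refine ⟨x, z, ?_, ?_, ?_⟩
        · intro hxz
          have hx : x ∉ (SimpleGraph.Walk.cons h₂ q'').support :=
            ((SimpleGraph.Walk.cons_isPath_iff _ _).mp hq).2
          apply hx
          rw [hxz]
          simp [SimpleGraph.Walk.support_cons]
        · simp [SimpleGraph.Walk.edges_cons, Sym2.eq_swap]
        · simp [SimpleGraph.Walk.edges_cons]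
    · obtain ⟨z1, z2, h12, he1, he2⟩ :=
        ih ((SimpleGraph.Walk.cons_isPath_iff _ _).mp hq).1 w hw' hwx2 hwy
      exact ⟨z1, z2, h12, by simp [SimpleGraph.Walk.edges_cons, he1],
        by simp [SimpleGraph.Walk.edges_cons, he2]⟩

lemma aux_first_edge {V : Type*} {Γ : SimpleGraph V} {x y : V} (q : Γ.Walk x y)
    (hxy : x ≠ y) : ∃ z, s(x, z) ∈ q.edges := by
  cases q with
  | nil => exact absurd rfl hxy
  | @cons _ z _ h q' => exact ⟨z, by simp [SimpleGraph.Walk.edges_cons]⟩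

/-- **Key lemma**: in a finite graph of maximum degree at most 2, if `{u1,v1}` and
`{u2,v2}` are distinct edges with `u1, u2` in the same component, then after deleting both
edges, `u1` and `v1` are disconnected. -/
lemma aux_key {V : Type*} [Fintype V] (H : SimpleGraph V)
    (hdeg : ∀ v, (H.neighborSet v).ncard ≤ 2)
    {u1 v1 u2 v2 : V} (h1 : H.Adj u1 v1) (h2 : H.Adj u2 v2)
    (hne : s(u1, v1) ≠ s(u2, v2))
    (hreach : H.Reachable u1 u2) :
    ¬ (H.deleteEdges {s(u1, v1), s(u2, v2)}).Reachable u1 v1 := by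
  classical
  intro r
  set Γ : SimpleGraph V := H.deleteEdges {s(u1, v1), s(u2, v2)} with hΓ
  obtain ⟨W⟩ := r
  let p : Γ.Walk u1 v1 := W.toPath
  have hp : p.IsPath := W.toPath.2
  have hpe : ∀ e ∈ p.edges, e ∈ H.edgeSet ∧ e ≠ s(u1, v1) ∧ e ≠ s(u2, v2) := by
    intro e he
    have := p.edges_subset_edgeSet he
    rw [hΓ, SimpleGraph.edgeSet_deleteEdges] at this
    refine ⟨this.1, ?_, ?_⟩ <;> intro h <;> exact this.2 (by simp [h])
  have hu1v1 : u1 ≠ v1 := h1.ne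
  have hclose : ∀ w ∈ p.support, ∀ z, H.Adj w z →
      z ∈ p.support ∧ (s(w, z) ∈ p.edges ∨ s(w, z) = s(u1, v1)) := by
    intro w hw z hz
    have main : ∃ z1 z2, z1 ≠ z2 ∧
        (s(w, z1) ∈ p.edges ∨ s(w, z1) = s(u1, v1)) ∧
        (s(w, z2) ∈ p.edges ∨ s(w, z2) = s(u1, v1)) ∧
        z1 ∈ p.support ∧ z2 ∈ p.support := by
      by_cases hwu : w = u1
      · subst hwu
        obtain ⟨z2, hz2⟩ := aux_first_edge p hu1v1
        refine ⟨v1, z2, ?_, Or.inr rfl, Or.inl hz2, p.end_mem_support,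
          p.snd_mem_support_of_mem_edges hz2⟩
        intro hv
        subst hv
        exact (hpe _ hz2).2.1 rfl
      · by_cases hwv : w = v1
        · subst hwv
          obtain ⟨z2, hz2'⟩ := aux_first_edge p.reverse (Ne.symm hu1v1)
          have hz2 : s(w, z2) ∈ p.edges := by
            rwa [SimpleGraph.Walk.edges_reverse, List.mem_reverse] at hz2'
          refine ⟨u1, z2, ?_, Or.inr Sym2.eq_swap, Or.inl hz2, p.start_mem_support,
            p.snd_mem_support_of_mem_edges hz2⟩
          intro hv
          subst hv
          exact (hpe _ hz2).2.1 Sym2.eq_swap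
        · obtain ⟨z1, z2, h12, he1, he2⟩ := aux_two_edges_of_internal p hp w hw hwu hwv
          exact ⟨z1, z2, h12, Or.inl he1, Or.inl he2,
            p.snd_mem_support_of_mem_edges he1, p.snd_mem_support_of_mem_edges he2⟩
    obtain ⟨z1, z2, h12, hez1, hez2, hs1, hs2⟩ := main
    have hnb : ∀ z', (s(w, z') ∈ p.edges ∨ s(w, z') = s(u1, v1)) → z' ∈ H.neighborSet w := by
      intro z' hz'
      rcases hz' with h' | h'
      · exact H.mem_edgeSet.mp (hpe _ h').1
      · rw [SimpleGraph.mem_neighborSet, ← SimpleGraph.mem_edgeSet, h']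
        exact H.mem_edgeSet.mpr h1
    have hsub : {z1, z2} ⊆ H.neighborSet w := by
      rintro z' (rfl | rfl)
      · exact hnb _ hez1
      · exact hnb _ hez2
    have hcard : H.neighborSet w = {z1, z2} := by
      refine (Set.eq_of_subset_of_ncard_le hsub ?_ (Set.toFinite _)).symm
      calc (H.neighborSet w).ncard ≤ 2 := hdeg w
        _ = ({z1, z2} : Set V).ncard := (Set.ncard_pair h12).symm
    have hzmem : z ∈ ({z1, z2} : Set V) := by rw [← hcard]; exact hz
    rcases hzmem with rfl | rfl
    · exact ⟨hs1, hez1⟩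
    · exact ⟨hs2, hez2⟩
  have hprop : ∀ {x y : V} (Wk : H.Walk x y), x ∈ p.support → y ∈ p.support := by
    intro x y Wk
    induction Wk with
    | nil => exact id
    | cons h q ih => exact fun hx => ih ((hclose _ hx _ h).1)
  obtain ⟨W2⟩ := hreach
  have hu2 : u2 ∈ p.support := hprop W2 p.start_mem_support
  rcases (hclose u2 hu2 v2 h2).2 with h' | h'
  · exact (hpe _ h').2.2 rfl
  · exact hne h'.symm

/-! ### Fin 3 bookkeeping -/

/-- The transposition of the colors `a` and `b`. -/
def sw3 (a b k : Fin 3) : Fin 3 := if k = a then b else if k = b then a else k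

lemma sw3_inj : ∀ a b x y : Fin 3, sw3 a b x = sw3 a b y → x = y := by decide
lemma sw3_ab : ∀ a b x : Fin 3, (x = a ∨ x = b) → (sw3 a b x = a ∨ sw3 a b x = b) := by decide
lemma sw3_ne_self : ∀ a b x : Fin 3, a ≠ b → (x = a ∨ x = b) → sw3 a b x ≠ x := by decide
lemma fin3_third_eq : ∀ a b g x : Fin 3, a ≠ b → g ≠ a → g ≠ b → x ≠ a → x ≠ b → x = g := by
  decide
lemma sw3_eq_third : ∀ a b g x : Fin 3, a ≠ b → g ≠ a → g ≠ b → sw3 a b x = g → x = g := by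
  decide
lemma fin3_exists_third : ∀ a b : Fin 3, ∃ g : Fin 3, g ≠ a ∧ g ≠ b := by decide
lemma fin2_eq_of_ne : ∀ i j j' : Fin 2, i ≠ j → i ≠ j' → j = j' := by decide

/-! ### Adjacency characterizations -/

variable {V : Type*} (G : SimpleGraph V) (u₁ v₁ u₂ v₂ : V)

lemma bicolor_adj (c : Sym2 V → Fin 3) (a b : Fin 3) (p q : V) :
    (bicolorSubgraph G c a b).Adj p q ↔ G.Adj p q ∧ (c s(p, q) = a ∨ c s(p, q) = b) := by
  rw [bicolorSubgraph, SimpleGraph.fromEdgeSet_adj]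
  constructor
  · rintro ⟨⟨h1, h2⟩, _⟩
    exact ⟨G.mem_edgeSet.mp h1, h2⟩
  · rintro ⟨h1, h2⟩
    exact ⟨⟨G.mem_edgeSet.mpr h1, h2⟩, h1.ne⟩

lemma sdl_adj_ll (p q : V) :
    (subdivideAndLink G u₁ v₁ u₂ v₂).Adj (Sum.inl p) (Sum.inl q) ↔
      G.Adj p q ∧ s(p, q) ≠ s(u₁, v₁) ∧ s(p, q) ≠ s(u₂, v₂) := by
  rw [subdivideAndLink, SimpleGraph.fromEdgeSet_adj]
  constructor
  · rintro ⟨hmem, hd⟩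
    rcases hmem with ⟨e0, he0, heq⟩ | h5
    · have he : e0 = s(p, q) := by
        apply Sym2.map.injective Sum.inl_injective
        rw [heq, Sym2.map_pair_eq]
      subst he
      rw [Set.mem_diff] at he0
      refine ⟨G.mem_edgeSet.mp he0.1, ?_, ?_⟩ <;> intro h <;> exact he0.2 (by simp [h])
    · exfalso
      simp only [Set.mem_insert_iff, Set.mem_singleton_iff] at h5
      rcases h5 with h | h | h | h | h <;> rw [Sym2.eq_iff] at h <;> simp at h
  · rintro ⟨hadj, h1, h2⟩
    refine ⟨Or.inl ⟨s(p, q), ?_, Sym2.map_pair_eq _ _ _⟩, by simp [hadj.ne]⟩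
    rw [Set.mem_diff]
    exact ⟨G.mem_edgeSet.mpr hadj, by simp [h1, h2]⟩

lemma sdl_adj_lr (p : V) (i : Fin 2) :
    (subdivideAndLink G u₁ v₁ u₂ v₂).Adj (Sum.inl p) (Sum.inr i) ↔
      (i = 0 ∧ (p = u₁ ∨ p = v₁)) ∨ (i = 1 ∧ (p = u₂ ∨ p = v₂)) := by
  rw [subdivideAndLink, SimpleGraph.fromEdgeSet_adj]
  constructor
  · rintro ⟨hmem, hd⟩
    rcases hmem with ⟨e0, he0, heq⟩ | h5
    · exfalso
      induction e0 using Sym2.ind with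
      | _ x y => rw [Sym2.map_pair_eq, Sym2.eq_iff] at heq; simp at heq
    · simp only [Set.mem_insert_iff, Set.mem_singleton_iff] at h5
      rcases h5 with h | h | h | h | h <;> rw [Sym2.eq_iff] at h <;>
        simp only [Sum.inl.injEq, Sum.inr.injEq, reduceCtorEq, false_and, and_false, or_false,
          false_or] at h <;> tauto
  · rintro (⟨rfl, (rfl | rfl)⟩ | ⟨rfl, (rfl | rfl)⟩) <;>
      refine ⟨Or.inr ?_, by simp⟩ <;> simp [Sym2.eq_iff]

lemma sdl_adj_rr (i j : Fin 2) :
    (subdivideAndLink G u₁ v₁ u₂ v₂).Adj (Sum.inr i) (Sum.inr j) ↔ i ≠ j := by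
  rw [subdivideAndLink, SimpleGraph.fromEdgeSet_adj]
  constructor
  · rintro ⟨hmem, hd⟩
    simpa using hd
  · intro hij
    have : (i = 0 ∧ j = 1) ∨ (i = 1 ∧ j = 0) := by omega
    refine ⟨Or.inr ?_, by simpa using hij⟩
    rcases this with ⟨rfl, rfl⟩ | ⟨rfl, rfl⟩ <;> simp [Sym2.eq_iff]

lemma sdl_cubic [Fintype V] (hcubic : ∀ v : V, (G.neighborSet v).ncard = 3)
    (hGe1 : G.Adj u₁ v₁) (hGe2 : G.Adj u₂ v₂) (hne : s(u₁, v₁) ≠ s(u₂, v₂)) :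
    ∀ w : V ⊕ Fin 2, ((subdivideAndLink G u₁ v₁ u₂ v₂).neighborSet w).ncard = 3 := by
  classical
  set G' := subdivideAndLink G u₁ v₁ u₂ v₂ with hG'
  intro w
  have hadj_rl : ∀ (i : Fin 2) (p : V), G'.Adj (Sum.inr i) (Sum.inl p) ↔
      (i = 0 ∧ (p = u₁ ∨ p = v₁)) ∨ (i = 1 ∧ (p = u₂ ∨ p = v₂)) := by
    intro i p
    rw [adj_comm]
    exact sdl_adj_lr G u₁ v₁ u₂ v₂ p i
  have hnotmem1 : ∀ {p q : V}, s(p, q) = s(u₁, v₁) → (p = u₁ ∨ p = v₁) := by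
    intro p q h
    rw [Sym2.eq_iff] at h
    tauto
  have hnotmem2 : ∀ {p q : V}, s(p, q) = s(u₂, v₂) → (p = u₂ ∨ p = v₂) := by
    intro p q h
    rw [Sym2.eq_iff] at h
    tauto
  rcases w with p | i
  · by_cases hp1 : p = u₁ ∨ p = v₁ <;> by_cases hp2 : p = u₂ ∨ p = v₂
    · -- incident to both subdivided edges
      obtain ⟨w1, he1p, hA1⟩ : ∃ w1, s(u₁, v₁) = s(p, w1) ∧ G.Adj p w1 := by
        rcases hp1 with rfl | rfl
        · exact ⟨v₁, rfl, hGe1⟩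
        · exact ⟨u₁, Sym2.eq_swap, hGe1.symm⟩
      obtain ⟨w2, he2p, hA2⟩ : ∃ w2, s(u₂, v₂) = s(p, w2) ∧ G.Adj p w2 := by
        rcases hp2 with rfl | rfl
        · exact ⟨v₂, rfl, hGe2⟩
        · exact ⟨u₂, Sym2.eq_swap, hGe2.symm⟩
      have hw12 : w1 ≠ w2 := by
        rintro rfl
        exact hne (he1p.trans he2p.symm)
      have hset : G'.neighborSet (Sum.inl p) = insert (Sum.inr 0) (insert (Sum.inr 1)
          (Sum.inl '' (G.neighborSet p \ {w1, w2}))) := by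
        ext z
        rcases z with q | j
        · simp only [mem_neighborSet, hG', sdl_adj_ll, Set.mem_insert_iff, Set.mem_image,
            Set.mem_diff, Set.mem_singleton_iff, mem_neighborSet, reduceCtorEq,
            Sum.inl.injEq, false_or]
          rw [he1p, he2p]
          constructor
          · rintro ⟨h1, h2, h3⟩
            refine ⟨q, ⟨h1, ?_⟩, rfl⟩
            rintro (rfl | rfl)
            · exact h2 rfl
            · exact h3 rfl
          · rintro ⟨q', ⟨h1, h2⟩, rfl⟩
            exact ⟨h1, fun h => h2 (Or.inl (Sym2.congr_right.mp h)),
              fun h => h2 (Or.inr (Sym2.congr_right.mp h))⟩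
        · simp only [mem_neighborSet, hG', sdl_adj_lr, Set.mem_insert_iff, Set.mem_image,
            Sum.inr.injEq, reduceCtorEq, and_false, exists_false, or_false]
          constructor
          · rintro (⟨rfl, _⟩ | ⟨rfl, _⟩) <;> simp
          · rintro (rfl | rfl) <;> simp [hp1, hp2]
      rw [hset]
      have hsub : ({w1, w2} : Set V) ⊆ G.neighborSet p := by
        rintro z (rfl | rfl)
        · exact hA1
        · exact hA2
      have h1 : (G.neighborSet p \ {w1, w2}).ncard = 1 := by
        rw [Set.ncard_diff hsub, hcubic, Set.ncard_pair hw12]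
      rw [Set.ncard_insert_of_notMem (by simp), Set.ncard_insert_of_notMem (by simp),
        Set.ncard_image_of_injective _ Sum.inl_injective, h1]
    · -- incident only to e1
      obtain ⟨w1, he1p, hA1⟩ : ∃ w1, s(u₁, v₁) = s(p, w1) ∧ G.Adj p w1 := by
        rcases hp1 with rfl | rfl
        · exact ⟨v₁, rfl, hGe1⟩
        · exact ⟨u₁, Sym2.eq_swap, hGe1.symm⟩
      have hset : G'.neighborSet (Sum.inl p) = insert (Sum.inr 0)
          (Sum.inl '' (G.neighborSet p \ {w1})) := by
        ext z
        rcases z with q | j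
        · simp only [mem_neighborSet, hG', sdl_adj_ll, Set.mem_insert_iff, Set.mem_image,
            Set.mem_diff, Set.mem_singleton_iff, mem_neighborSet, reduceCtorEq,
            Sum.inl.injEq, false_or]
          rw [he1p]
          constructor
          · rintro ⟨h1, h2, _⟩
            exact ⟨q, ⟨h1, fun h => h2 (by rw [h])⟩, rfl⟩
          · rintro ⟨q', ⟨h1, h2⟩, rfl⟩
            exact ⟨h1, fun h => h2 (Sym2.congr_right.mp h), fun h => hp2 (hnotmem2 h)⟩
        · simp only [mem_neighborSet, hG', sdl_adj_lr, Set.mem_insert_iff, Set.mem_image,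
            Sum.inr.injEq, reduceCtorEq, and_false, exists_false, or_false]
          constructor
          · rintro (⟨rfl, _⟩ | ⟨rfl, h⟩)
            · simp
            · exact absurd h hp2
          · rintro rfl
            simp [hp1]
      have hw1mem : w1 ∈ G.neighborSet p := hA1
      rw [hset, Set.ncard_insert_of_notMem (by simp),
        Set.ncard_image_of_injective _ Sum.inl_injective,
        Set.ncard_diff_singleton_of_mem hw1mem, hcubic]
    · -- incident only to e2
      obtain ⟨w2, he2p, hA2⟩ : ∃ w2, s(u₂, v₂) = s(p, w2) ∧ G.Adj p w2 := by
        rcases hp2 with rfl | rfl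
        · exact ⟨v₂, rfl, hGe2⟩
        · exact ⟨u₂, Sym2.eq_swap, hGe2.symm⟩
      have hset : G'.neighborSet (Sum.inl p) = insert (Sum.inr 1)
          (Sum.inl '' (G.neighborSet p \ {w2})) := by
        ext z
        rcases z with q | j
        · simp only [mem_neighborSet, hG', sdl_adj_ll, Set.mem_insert_iff, Set.mem_image,
            Set.mem_diff, Set.mem_singleton_iff, mem_neighborSet, reduceCtorEq,
            Sum.inl.injEq, false_or]
          rw [he2p]
          constructor
          · rintro ⟨h1, _, h2⟩
            exact ⟨q, ⟨h1, fun h => h2 (by rw [h])⟩, rfl⟩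
          · rintro ⟨q', ⟨h1, h2⟩, rfl⟩
            exact ⟨h1, fun h => hp1 (hnotmem1 h), fun h => h2 (Sym2.congr_right.mp h)⟩
        · simp only [mem_neighborSet, hG', sdl_adj_lr, Set.mem_insert_iff, Set.mem_image,
            Sum.inr.injEq, reduceCtorEq, and_false, exists_false, or_false]
          constructor
          · rintro (⟨rfl, h⟩ | ⟨rfl, _⟩)
            · exact absurd h hp1
            · simp
          · rintro rfl
            simp [hp2]
      have hw2mem : w2 ∈ G.neighborSet p := hA2
      rw [hset, Set.ncard_insert_of_notMem (by simp),
        Set.ncard_image_of_injective _ Sum.inl_injective,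
        Set.ncard_diff_singleton_of_mem hw2mem, hcubic]
    · -- incident to neither
      have hset : G'.neighborSet (Sum.inl p) = Sum.inl '' (G.neighborSet p) := by
        ext z
        rcases z with q | j
        · simp only [mem_neighborSet, hG', sdl_adj_ll, Set.mem_image, Sum.inl.injEq,
            mem_neighborSet]
          constructor
          · rintro ⟨h1, _, _⟩
            exact ⟨q, h1, rfl⟩
          · rintro ⟨q', h1, rfl⟩
            exact ⟨h1, fun h => hp1 (hnotmem1 h), fun h => hp2 (hnotmem2 h)⟩
        · simp only [mem_neighborSet, hG', sdl_adj_lr, Set.mem_image, reduceCtorEq,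
            exists_false, iff_false, exists_and_right, and_false]
          rintro (⟨rfl, h⟩ | ⟨rfl, h⟩)
          · exact hp1 h
          · exact hp2 h
      rw [hset, Set.ncard_image_of_injective _ Sum.inl_injective, hcubic]
  · -- new vertices
    have hu1v1 : u₁ ≠ v₁ := hGe1.ne
    have hu2v2 : u₂ ≠ v₂ := hGe2.ne
    have h01 : (0 : Fin 2) ≠ 1 := by decide
    rcases (by omega : i = 0 ∨ i = 1) with rfl | rfl
    · have hset : G'.neighborSet (Sum.inr 0) =
          insert (Sum.inl u₁) (insert (Sum.inl v₁) {Sum.inr 1}) := by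
        ext z
        rcases z with q | j
        · simp only [mem_neighborSet, hadj_rl]
          constructor
          · rintro (⟨_, h⟩ | ⟨h, _⟩)
            · rcases h with rfl | rfl <;> simp
            · exact absurd h h01
          · intro h
            simp only [Set.mem_insert_iff, Set.mem_singleton_iff, Sum.inl.injEq,
              reduceCtorEq, or_false] at h
            tauto
        · simp only [mem_neighborSet, hG', sdl_adj_rr, Set.mem_insert_iff,
            Set.mem_singleton_iff, reduceCtorEq, Sum.inr.injEq, false_or]
          omega
      rw [hset, Set.ncard_insert_of_notMem (by simp [hu1v1]),
        Set.ncard_insert_of_notMem (by simp), Set.ncard_singleton]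
    · have hset : G'.neighborSet (Sum.inr 1) =
          insert (Sum.inl u₂) (insert (Sum.inl v₂) {Sum.inr 0}) := by
        ext z
        rcases z with q | j
        · simp only [mem_neighborSet, hadj_rl]
          constructor
          · rintro (⟨h, _⟩ | ⟨_, h⟩)
            · exact absurd h h01.symm
            · rcases h with rfl | rfl <;> simp
          · intro h
            simp only [Set.mem_insert_iff, Set.mem_singleton_iff, Sum.inl.injEq,
              reduceCtorEq, or_false] at h
            tauto
        · simp only [mem_neighborSet, hG', sdl_adj_rr, Set.mem_insert_iff,
            Set.mem_singleton_iff, reduceCtorEq, Sum.inr.injEq, false_or]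
          omega
      rw [hset, Set.ncard_insert_of_notMem (by simp [hu2v2]),
        Set.ncard_insert_of_notMem (by simp), Set.ncard_singleton]

/-! ### The recoloring function -/

open Classical in
/-- The coloring of the subdivided graph: edges inside `S` get their `a`/`b` colors
swapped, the subdivision edges are colored according to which side of `S` they are on,
and the linking edge gets the third color `g`. -/
noncomputable def linkColor (c : Sym2 V → Fin 3) (a b g : Fin 3) (S : Set V) :
    V ⊕ Fin 2 → V ⊕ Fin 2 → Fin 3
  | Sum.inl p, Sum.inl q => if p ∈ S ∧ q ∈ S then sw3 a b (c s(p, q)) else c s(p, q)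
  | Sum.inl p, Sum.inr i =>
      if p ∈ S then sw3 a b (c (if i = 0 then s(u₁, v₁) else s(u₂, v₂)))
      else c (if i = 0 then s(u₁, v₁) else s(u₂, v₂))
  | Sum.inr i, Sum.inl p =>
      if p ∈ S then sw3 a b (c (if i = 0 then s(u₁, v₁) else s(u₂, v₂)))
      else c (if i = 0 then s(u₁, v₁) else s(u₂, v₂))
  | Sum.inr _, Sum.inr _ => g

open Classical in
lemma linkColor_symm (c : Sym2 V → Fin 3) (a b g : Fin 3) (S : Set V) (x y : V ⊕ Fin 2) :
    linkColor u₁ v₁ u₂ v₂ c a b g S x y = linkColor u₁ v₁ u₂ v₂ c a b g S y x := by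
  rcases x with p | i <;> rcases y with q | j <;> simp only [linkColor]
  rw [show s(p, q) = s(q, p) from Sym2.eq_swap]
  exact if_congr and_comm rfl rfl

end Aux

/-- **Lemma 2.1, abstract form.** If two distinct edges of a properly edge
3-colored finite simple cubic graph lie in a common colored disk (a connected component of
the subgraph of edges colored `a` or `b`), then the cubic graph obtained by subdividing both
edges and joining the two new vertices by a new edge is again cubic and admits a proper edge
3-coloring. -/
theorem subdivide_and_link_colorable {V : Type*} [Fintype V] (G : SimpleGraph V)
    (hcubic : ∀ v : V, (G.neighborSet v).ncard = 3)
    (c : Sym2 V → Fin 3) (hc : IsProperEdgeColoring G c)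
    (a b : Fin 3) (hab : a ≠ b)
    (u₁ v₁ u₂ v₂ : V)
    (h₁ : s(u₁, v₁) ∈ (bicolorSubgraph G c a b).edgeSet)
    (h₂ : s(u₂, v₂) ∈ (bicolorSubgraph G c a b).edgeSet)
    (hne : s(u₁, v₁) ≠ s(u₂, v₂))
    (hsame : (bicolorSubgraph G c a b).connectedComponentMk u₁ =
      (bicolorSubgraph G c a b).connectedComponentMk u₂) :
    (∀ w : V ⊕ Fin 2, ((subdivideAndLink G u₁ v₁ u₂ v₂).neighborSet w).ncard = 3) ∧
    ∃ c' : Sym2 (V ⊕ Fin 2) → Fin 3,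
      IsProperEdgeColoring (subdivideAndLink G u₁ v₁ u₂ v₂) c' := by
  classical
  have h₁' := h₁
  have h₂' := h₂
  rw [SimpleGraph.mem_edgeSet, bicolor_adj] at h₁' h₂'
  obtain ⟨hGa1, hce1⟩ := h₁'
  obtain ⟨hGa2, hce2⟩ := h₂'
  refine ⟨sdl_cubic G u₁ v₁ u₂ v₂ hcubic hGa1 hGa2 hne, ?_⟩
  -- Basic color facts
  have hcp : ∀ p q q', G.Adj p q → G.Adj p q' → q ≠ q' → c s(p, q) ≠ c s(p, q') := by
    intro p q q' hq hq' hqq'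
    refine hc _ (G.mem_edgeSet.mpr hq) _ (G.mem_edgeSet.mpr hq')
      (fun h => hqq' (Sym2.congr_right.mp h)) ⟨p, ?_, ?_⟩ <;> simp
  -- The two-colored subgraph and its degree bound
  have hHadj : ∀ p q, (bicolorSubgraph G c a b).Adj p q ↔
      G.Adj p q ∧ (c s(p, q) = a ∨ c s(p, q) = b) := bicolor_adj G c a b
  have hdeg : ∀ v, ((bicolorSubgraph G c a b).neighborSet v).ncard ≤ 2 := by
    intro v
    have hinj : Set.InjOn (fun w => c s(v, w)) ((bicolorSubgraph G c a b).neighborSet v) := by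
      intro w hw w' hw' hcc
      by_contra hne'
      exact hcp v w w' ((hHadj v w).mp hw).1 ((hHadj v w').mp hw').1 hne' hcc
    have himg : (fun w => c s(v, w)) '' ((bicolorSubgraph G c a b).neighborSet v) ⊆
        {a, b} := by
      rintro x ⟨w, hw, rfl⟩
      simpa using ((hHadj v w).mp hw).2
    calc ((bicolorSubgraph G c a b).neighborSet v).ncard
        = ((fun w => c s(v, w)) '' ((bicolorSubgraph G c a b).neighborSet v)).ncard :=
          (Set.ncard_image_of_injOn hinj).symm
      _ ≤ ({a, b} : Set (Fin 3)).ncard := Set.ncard_le_ncard himg (Set.toFinite _)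
      _ ≤ 2 := le_trans (Set.ncard_insert_le _ _) (by simp)
  have hH1 : (bicolorSubgraph G c a b).Adj u₁ v₁ := (hHadj _ _).mpr ⟨hGa1, hce1⟩
  have hH2 : (bicolorSubgraph G c a b).Adj u₂ v₂ := (hHadj _ _).mpr ⟨hGa2, hce2⟩
  -- the two key disconnection facts
  have hK1 : ¬ ((bicolorSubgraph G c a b).deleteEdges {s(u₁, v₁), s(u₂, v₂)}).Reachable u₁ v₁ :=
    aux_key _ hdeg hH1 hH2 hne (SimpleGraph.ConnectedComponent.eq.mp hsame)
  have hK2 : ¬ ((bicolorSubgraph G c a b).deleteEdges {s(u₁, v₁), s(u₂, v₂)}).Reachable u₂ v₂ := by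
    have h := aux_key _ hdeg hH2 hH1 (Ne.symm hne)
      (SimpleGraph.ConnectedComponent.eq.mp hsame.symm)
    rwa [Set.pair_comm] at h
  -- construct the swapping region S
  set Γ := (bicolorSubgraph G c a b).deleteEdges {s(u₁, v₁), s(u₂, v₂)} with hΓdef
  obtain ⟨S, hv1S, hu1S, hone2, hclS⟩ : ∃ S : Set V, v₁ ∈ S ∧ u₁ ∉ S ∧
      ((u₂ ∈ S ∧ v₂ ∉ S) ∨ (u₂ ∉ S ∧ v₂ ∈ S)) ∧ (∀ p q, Γ.Adj p q → (p ∈ S ↔ q ∈ S)) := by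
    by_cases hA : Γ.Reachable v₁ u₂ ∨ Γ.Reachable v₁ v₂
    · refine ⟨{w | Γ.Reachable v₁ w}, Reachable.refl _, fun h => hK1 h.symm, ?_, ?_⟩
      · rcases hA with h | h
        · exact Or.inl ⟨h, fun hv2 => hK2 (h.symm.trans hv2)⟩
        · exact Or.inr ⟨fun hu2 => hK2 (hu2.symm.trans h), h⟩
      · intro p q hadj
        exact ⟨fun hp => hp.trans hadj.reachable, fun hq => hq.trans hadj.symm.reachable⟩
    · push_neg at hA
      by_cases hB : Γ.Reachable u₂ u₁
      · refine ⟨{w | Γ.Reachable v₁ w ∨ Γ.Reachable v₂ w}, Or.inl (Reachable.refl _), ?_,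
          Or.inr ⟨?_, Or.inr (Reachable.refl _)⟩, ?_⟩
        · rintro (h | h)
          · exact hK1 h.symm
          · exact hK2 (hB.trans h.symm)
        · rintro (h | h)
          · exact hA.1 h
          · exact hK2 h.symm
        · intro p q hadj
          constructor
          · rintro (h | h)
            · exact Or.inl (h.trans hadj.reachable)
            · exact Or.inr (h.trans hadj.reachable)
          · rintro (h | h)
            · exact Or.inl (h.trans hadj.symm.reachable)
            · exact Or.inr (h.trans hadj.symm.reachable)
      · refine ⟨{w | Γ.Reachable v₁ w ∨ Γ.Reachable u₂ w}, Or.inl (Reachable.refl _), ?_,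
          Or.inl ⟨Or.inr (Reachable.refl _), ?_⟩, ?_⟩
        · rintro (h | h)
          · exact hK1 h.symm
          · exact hB h
        · rintro (h | h)
          · exact hA.2 h
          · exact hK2 h
        · intro p q hadj
          constructor
          · rintro (h | h)
            · exact Or.inl (h.trans hadj.reachable)
            · exact Or.inr (h.trans hadj.reachable)
          · rintro (h | h)
            · exact Or.inl (h.trans hadj.symm.reachable)
            · exact Or.inr (h.trans hadj.symm.reachable)
  -- third color
  obtain ⟨g, hga, hgb⟩ := fin3_exists_third a b
  have habg : ∀ x : Fin 3, (x = a ∨ x = b) → x ≠ g := by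
    rintro x (rfl | rfl)
    · exact Ne.symm hga
    · exact Ne.symm hgb
  have hswg : ∀ x : Fin 3, (x = a ∨ x = b) → sw3 a b x ≠ g := fun x hx =>
    habg _ (sw3_ab a b x hx)
  -- edges not on the cycle crossing the boundary of S get the third color
  have hSiff : ∀ p q, G.Adj p q → s(p, q) ≠ s(u₁, v₁) → s(p, q) ≠ s(u₂, v₂) →
      (c s(p, q) = a ∨ c s(p, q) = b) → (p ∈ S ↔ q ∈ S) := by
    intro p q h hn1 hn2 hcol
    apply hclS
    rw [hΓdef, SimpleGraph.deleteEdges_adj]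
    exact ⟨(hHadj p q).mpr ⟨h, hcol⟩, by simp [hn1, hn2]⟩
  have hF3g : ∀ p q, G.Adj p q → s(p, q) ≠ s(u₁, v₁) → s(p, q) ≠ s(u₂, v₂) →
      ¬(p ∈ S ↔ q ∈ S) → c s(p, q) = g := by
    intro p q h hn1 hn2 hiff
    refine fin3_third_eq a b g _ hab hga hgb ?_ ?_ <;> intro hcol
    · exact hiff (hSiff p q h hn1 hn2 (Or.inl hcol))
    · exact hiff (hSiff p q h hn1 hn2 (Or.inr hcol))
  -- colors of edges at a common endpoint of the subdivided edges
  have hceq1 : ∀ p q, (p = u₁ ∨ p = v₁) → G.Adj p q → s(p, q) ≠ s(u₁, v₁) →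
      c s(p, q) ≠ c s(u₁, v₁) := by
    intro p q hp hadj hne'
    rcases hp with rfl | rfl
    · exact hcp p q v₁ hadj hGa1 (fun h => hne' (by rw [h]))
    · have := hcp p q u₁ hadj hGa1.symm
        (fun h => hne' (by rw [h]; exact Sym2.eq_swap))
      rwa [show s(p, u₁) = s(u₁, p) from Sym2.eq_swap] at this
  have hceq2 : ∀ p q, (p = u₂ ∨ p = v₂) → G.Adj p q → s(p, q) ≠ s(u₂, v₂) →
      c s(p, q) ≠ c s(u₂, v₂) := by
    intro p q hp hadj hne'
    rcases hp with rfl | rfl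
    · exact hcp p q v₂ hadj hGa2 (fun h => hne' (by rw [h]))
    · have := hcp p q u₂ hadj hGa2.symm
        (fun h => hne' (by rw [h]; exact Sym2.eq_swap))
      rwa [show s(p, u₂) = s(u₂, p) from Sym2.eq_swap] at this
  have hc12 : ∀ p, (p = u₁ ∨ p = v₁) → (p = u₂ ∨ p = v₂) → c s(u₁, v₁) ≠ c s(u₂, v₂) := by
    intro p hp1 hp2
    refine hc _ (G.mem_edgeSet.mpr hGa1) _ (G.mem_edgeSet.mpr hGa2) hne ⟨p, ?_, ?_⟩
    · rcases hp1 with rfl | rfl <;> simp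
    · rcases hp2 with rfl | rfl <;> simp
  -- the coloring
  set fc := linkColor u₁ v₁ u₂ v₂ c a b g S with hfc
  have val_ll : ∀ p q, fc (Sum.inl p) (Sum.inl q) =
      if p ∈ S ∧ q ∈ S then sw3 a b (c s(p, q)) else c s(p, q) := fun p q => rfl
  have val_lr0 : ∀ p, fc (Sum.inl p) (Sum.inr 0) =
      if p ∈ S then sw3 a b (c s(u₁, v₁)) else c s(u₁, v₁) := fun p => rfl
  have val_lr1 : ∀ p, fc (Sum.inl p) (Sum.inr 1) =
      if p ∈ S then sw3 a b (c s(u₂, v₂)) else c s(u₂, v₂) := fun p => rfl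
  have val_rl0 : ∀ p, fc (Sum.inr 0) (Sum.inl p) =
      if p ∈ S then sw3 a b (c s(u₁, v₁)) else c s(u₁, v₁) := fun p => rfl
  have val_rl1 : ∀ p, fc (Sum.inr 1) (Sum.inl p) =
      if p ∈ S then sw3 a b (c s(u₂, v₂)) else c s(u₂, v₂) := fun p => rfl
  have val_rr : ∀ i j, fc (Sum.inr i) (Sum.inr j) = g := fun i j => rfl
  -- component proofs
  have Hll : ∀ p q q', (subdivideAndLink G u₁ v₁ u₂ v₂).Adj (Sum.inl p) (Sum.inl q) →
      (subdivideAndLink G u₁ v₁ u₂ v₂).Adj (Sum.inl p) (Sum.inl q') → q ≠ q' →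
      fc (Sum.inl p) (Sum.inl q) ≠ fc (Sum.inl p) (Sum.inl q') := by
    intro p q q' h1 h2 hqq'
    obtain ⟨h1a, h1b, h1c⟩ := (sdl_adj_ll G u₁ v₁ u₂ v₂ p q).mp h1
    obtain ⟨h2a, h2b, h2c⟩ := (sdl_adj_ll G u₁ v₁ u₂ v₂ p q').mp h2
    rw [val_ll, val_ll]
    by_cases hpS : p ∈ S
    · by_cases hqS : q ∈ S <;> by_cases hq'S : q' ∈ S
      · rw [if_pos ⟨hpS, hqS⟩, if_pos ⟨hpS, hq'S⟩]
        exact fun h => hcp p q q' h1a h2a hqq' (sw3_inj a b _ _ h)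
      · rw [if_pos ⟨hpS, hqS⟩, if_neg (fun hh => hq'S hh.2)]
        have hg2 : c s(p, q') = g := hF3g p q' h2a h2b h2c (fun hiff => hq'S (hiff.mp hpS))
        rw [hg2]
        intro h
        have hgg : c s(p, q) = g := sw3_eq_third a b g _ hab hga hgb h
        exact hcp p q q' h1a h2a hqq' (hgg.trans hg2.symm)
      · rw [if_neg (fun hh => hqS hh.2), if_pos ⟨hpS, hq'S⟩]
        have hg1 : c s(p, q) = g := hF3g p q h1a h1b h1c (fun hiff => hqS (hiff.mp hpS))
        rw [hg1]
        intro h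
        have hgg : c s(p, q') = g := sw3_eq_third a b g _ hab hga hgb h.symm
        exact hcp p q q' h1a h2a hqq' (hg1.trans hgg.symm)
      · rw [if_neg (fun hh => hqS hh.2), if_neg (fun hh => hq'S hh.2)]
        exact hcp p q q' h1a h2a hqq'
    · rw [if_neg (fun hh => hpS hh.1), if_neg (fun hh => hpS hh.1)]
      exact hcp p q q' h1a h2a hqq'
  have Hlr : ∀ p q i, (subdivideAndLink G u₁ v₁ u₂ v₂).Adj (Sum.inl p) (Sum.inl q) →
      (subdivideAndLink G u₁ v₁ u₂ v₂).Adj (Sum.inl p) (Sum.inr i) →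
      fc (Sum.inl p) (Sum.inl q) ≠ fc (Sum.inl p) (Sum.inr i) := by
    intro p q i h1 h2
    obtain ⟨h1a, h1b, h1c⟩ := (sdl_adj_ll G u₁ v₁ u₂ v₂ p q).mp h1
    rcases (sdl_adj_lr G u₁ v₁ u₂ v₂ p i).mp h2 with ⟨rfl, hp⟩ | ⟨rfl, hp⟩
    · rw [val_ll, val_lr0]
      by_cases hpS : p ∈ S
      · rw [if_pos hpS]
        by_cases hqS : q ∈ S
        · rw [if_pos ⟨hpS, hqS⟩]
          exact fun h => hceq1 p q hp h1a h1b (sw3_inj a b _ _ h)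
        · rw [if_neg (fun hh => hqS hh.2),
            hF3g p q h1a h1b h1c (fun hiff => hqS (hiff.mp hpS))]
          exact (hswg _ hce1).symm
      · rw [if_neg hpS, if_neg (fun hh => hpS hh.1)]
        exact hceq1 p q hp h1a h1b
    · rw [val_ll, val_lr1]
      by_cases hpS : p ∈ S
      · rw [if_pos hpS]
        by_cases hqS : q ∈ S
        · rw [if_pos ⟨hpS, hqS⟩]
          exact fun h => hceq2 p q hp h1a h1c (sw3_inj a b _ _ h)
        · rw [if_neg (fun hh => hqS hh.2),
            hF3g p q h1a h1b h1c (fun hiff => hqS (hiff.mp hpS))]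
          exact (hswg _ hce2).symm
      · rw [if_neg hpS, if_neg (fun hh => hpS hh.1)]
        exact hceq2 p q hp h1a h1c
  have Hrr2 : ∀ p i j, (subdivideAndLink G u₁ v₁ u₂ v₂).Adj (Sum.inl p) (Sum.inr i) →
      (subdivideAndLink G u₁ v₁ u₂ v₂).Adj (Sum.inl p) (Sum.inr j) → i ≠ j →
      fc (Sum.inl p) (Sum.inr i) ≠ fc (Sum.inl p) (Sum.inr j) := by
    intro p i j h1 h2 hij
    rcases (sdl_adj_lr G u₁ v₁ u₂ v₂ p i).mp h1 with ⟨rfl, hp1⟩ | ⟨rfl, hp1⟩ <;>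
      rcases (sdl_adj_lr G u₁ v₁ u₂ v₂ p j).mp h2 with ⟨hj, hp2⟩ | ⟨hj, hp2⟩
    · exact absurd hj.symm hij
    · subst hj
      rw [val_lr0, val_lr1]
      by_cases hpS : p ∈ S
      · rw [if_pos hpS, if_pos hpS]
        exact fun h => hc12 p hp1 hp2 (sw3_inj a b _ _ h)
      · rw [if_neg hpS, if_neg hpS]
        exact hc12 p hp1 hp2
    · subst hj
      rw [val_lr1, val_lr0]
      by_cases hpS : p ∈ S
      · rw [if_pos hpS, if_pos hpS]
        exact fun h => hc12 p hp2 hp1 (sw3_inj a b _ _ h.symm)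
      · rw [if_neg hpS, if_neg hpS]
        exact fun h => hc12 p hp2 hp1 h.symm
    · exact absurd hj.symm hij
  have Hrl2 : ∀ (i : Fin 2) p p', (subdivideAndLink G u₁ v₁ u₂ v₂).Adj (Sum.inr i) (Sum.inl p) →
      (subdivideAndLink G u₁ v₁ u₂ v₂).Adj (Sum.inr i) (Sum.inl p') → p ≠ p' →
      fc (Sum.inr i) (Sum.inl p) ≠ fc (Sum.inr i) (Sum.inl p') := by
    intro i p p' h1 h2 hpp'
    rcases (sdl_adj_lr G u₁ v₁ u₂ v₂ p i).mp h1.symm with ⟨rfl, hp⟩ | ⟨rfl, hp⟩ <;>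
      rcases (sdl_adj_lr G u₁ v₁ u₂ v₂ p' _).mp h2.symm with ⟨hj, hp'⟩ | ⟨hj, hp'⟩
    · rcases hp with rfl | rfl <;> rcases hp' with rfl | rfl
      · exact absurd rfl hpp'
      · rw [val_rl0, val_rl0, if_neg hu1S, if_pos hv1S]
        exact fun h => sw3_ne_self a b _ hab hce1 h.symm
      · rw [val_rl0, val_rl0, if_pos hv1S, if_neg hu1S]
        exact sw3_ne_self a b _ hab hce1
      · exact absurd rfl hpp'
    · exact absurd hj (by decide)
    · exact absurd hj (by decide)
    · rcases hone2 with ⟨hu2S, hv2S⟩ | ⟨hu2S, hv2S⟩ <;>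
        rcases hp with rfl | rfl <;> rcases hp' with rfl | rfl
      · exact absurd rfl hpp'
      · rw [val_rl1, val_rl1, if_pos hu2S, if_neg hv2S]
        exact sw3_ne_self a b _ hab hce2
      · rw [val_rl1, val_rl1, if_neg hv2S, if_pos hu2S]
        exact fun h => sw3_ne_self a b _ hab hce2 h.symm
      · exact absurd rfl hpp'
      · exact absurd rfl hpp'
      · rw [val_rl1, val_rl1, if_neg hu2S, if_pos hv2S]
        exact fun h => sw3_ne_self a b _ hab hce2 h.symm
      · rw [val_rl1, val_rl1, if_pos hv2S, if_neg hu2S]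
        exact sw3_ne_self a b _ hab hce2
      · exact absurd rfl hpp'
  have Hrlr : ∀ (i : Fin 2) p j, (subdivideAndLink G u₁ v₁ u₂ v₂).Adj (Sum.inr i) (Sum.inl p) →
      fc (Sum.inr i) (Sum.inl p) ≠ fc (Sum.inr i) (Sum.inr j) := by
    intro i p j h1
    rw [val_rr]
    rcases (sdl_adj_lr G u₁ v₁ u₂ v₂ p i).mp h1.symm with ⟨rfl, hp⟩ | ⟨rfl, hp⟩
    · rw [val_rl0]
      by_cases hpS : p ∈ S
      · rw [if_pos hpS]
        exact hswg _ hce1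
      · rw [if_neg hpS]
        exact habg _ hce1
    · rw [val_rl1]
      by_cases hpS : p ∈ S
      · rw [if_pos hpS]
        exact hswg _ hce2
      · rw [if_neg hpS]
        exact habg _ hce2
  -- assembly
  refine ⟨Sym2.lift ⟨fc, fun x y => linkColor_symm u₁ v₁ u₂ v₂ c a b g S x y⟩, ?_⟩
  intro E1 hE1 E2 hE2 hneE hshare
  obtain ⟨z, hz1, hz2⟩ := hshare
  obtain ⟨x, rfl⟩ := Sym2.mem_iff_exists.mp hz1
  obtain ⟨y, rfl⟩ := Sym2.mem_iff_exists.mp hz2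
  have hxy : x ≠ y := fun h => hneE (by rw [h])
  have hA1 : (subdivideAndLink G u₁ v₁ u₂ v₂).Adj z x :=
    ((subdivideAndLink G u₁ v₁ u₂ v₂).mem_edgeSet).mp hE1
  have hA2 : (subdivideAndLink G u₁ v₁ u₂ v₂).Adj z y :=
    ((subdivideAndLink G u₁ v₁ u₂ v₂).mem_edgeSet).mp hE2
  simp only [Sym2.lift_mk]
  rcases z with p | i
  · rcases x with q | ix <;> rcases y with q' | jy
    · exact Hll p q q' hA1 hA2 (fun h => hxy (by rw [h]))
    · exact Hlr p q jy hA1 hA2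
    · exact (Hlr p q' ix hA2 hA1).symm
    · exact Hrr2 p ix jy hA1 hA2 (fun h => hxy (by rw [h]))
  · rcases x with q | ix <;> rcases y with q' | jy
    · exact Hrl2 i q q' hA1 hA2 (fun h => hxy (by rw [h]))
    · exact Hrlr i q jy hA1
    · exact (Hrlr i q' ix hA2).symm
    · exact absurd
        (fin2_eq_of_ne i ix jy ((sdl_adj_rr G u₁ v₁ u₂ v₂ i ix).mp hA1)
          ((sdl_adj_rr G u₁ v₁ u₂ v₂ i jy).mp hA2))
        (fun h => hxy (by rw [h]))
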